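/- arXiv:1803.00878 — 7 statements merged into one kernel-verified Lean document; each statement's English description precedes it below -/
import Mathlib

section
/- Let f : ℝ^d → ℝ^d be a continuously differentiable function such that at every point its Jacobian matrix is strictly diagonally dominant (positive diagonal, negative off-diagonal, positive row sums). Then f is injective. -/
open Finset

/-- A C¹ map `f : ℝ^d → ℝ^d` whose Jacobian matrix at every point is strictly
diagonally dominant (positive diagonal, negative off-diagonal, positive row sums)
is injective. -/
theorem injective_of_diagDominant_jacobian (d : ℕ)
    (f : (Fin d → ℝ) → Fin d → ℝ) (hf : ContDiff ℝ 1 f)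
    (J : (Fin d → ℝ) → Matrix (Fin d) (Fin d) ℝ)
    (hJ : ∀ x i j, J x i j = fderiv ℝ f x (Pi.single j 1) i)
    (hdiag : ∀ x i, 0 < J x i i)
    (hoff : ∀ x i j, i ≠ j → J x i j < 0)
    (hrow : ∀ x i, 0 < ∑ j : Fin d, J x i j) :
    Function.Injective f := by
  have hdiff : Differentiable ℝ f := hf.differentiable one_ne_zero
  -- key: derivative formula
  have hder : ∀ (p v : Fin d → ℝ) (i : Fin d),
      fderiv ℝ f p v i = ∑ j : Fin d, v j * J p i j := by
    intro p v i
    have hv : v = ∑ j : Fin d, v j • (Pi.single j 1 : Fin d → ℝ) := by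
      funext k
      simp [Finset.sum_apply, Pi.single_apply, mul_comm]
    conv_lhs => rw [hv]
    rw [map_sum]
    simp only [map_smul]
    rw [Finset.sum_apply]
    exact Finset.sum_congr rfl fun j _ => by simp [hJ p i j]
  -- key lemma: no two points with f x = f y and a dominant positive coordinate
  have key : ∀ x y : Fin d → ℝ, f x = f y → ∀ i : Fin d,
      0 < x i - y i → (∀ j, |x j - y j| ≤ x i - y i) → False := by
    intro x y hxy i hvi hmax
    set v : Fin d → ℝ := fun j => x j - y j with hvdef
    set φ : ℝ → ℝ := fun t => f (y + t • v) i with hφdef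
    have hγ : ∀ t : ℝ, HasDerivAt (fun s : ℝ => y + s • v) v t := by
      intro t
      simpa using ((hasDerivAt_id t).smul_const v).const_add y
    have hφ' : ∀ t : ℝ, HasDerivAt φ (fderiv ℝ f (y + t • v) v i) t := by
      intro t
      have h1 : HasDerivAt (fun s : ℝ => f (y + s • v))
          (fderiv ℝ f (y + t • v) v) t :=
        (hdiff (y + t • v)).hasFDerivAt.comp_hasDerivAt t (hγ t)
      have h2 := (ContinuousLinearMap.proj (R := ℝ) (φ := fun _ : Fin d => ℝ)
        i).hasFDerivAt.comp_hasDerivAt t h1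
      exact h2
    -- derivative is positive everywhere
    have hpos : ∀ t : ℝ, 0 < fderiv ℝ f (y + t • v) v i := by
      intro t
      rw [hder]
      set p := y + t • v
      have hterm : ∀ j ∈ Finset.univ, v i * J p i j ≤ v j * J p i j := by
        intro j _
        rcases eq_or_ne i j with rfl | hij
        · exact le_refl _
        · have hJneg : J p i j < 0 := hoff p i j hij
          have hvj : v j ≤ v i := le_trans (le_abs_self _) (hmax j)
          exact mul_le_mul_of_nonpos_right hvj hJneg.le
      calc (0:ℝ) < v i * ∑ j : Fin d, J p i j := mul_pos hvi (hrow p i)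
        _ = ∑ j : Fin d, v i * J p i j := Finset.mul_sum _ _ _
        _ ≤ ∑ j : Fin d, v j * J p i j := Finset.sum_le_sum hterm
    -- mean value theorem
    have hcont : ContinuousOn φ (Set.Icc 0 1) := fun t _ => (hφ' t).continuousAt.continuousWithinAt
    obtain ⟨c, _, hc⟩ := exists_hasDerivAt_eq_slope φ
      (fun t => fderiv ℝ f (y + t • v) v i) one_pos hcont
      (fun t _ => hφ' t)
    have h0 : φ 0 = f y i := by simp [hφdef]
    have h1 : φ 1 = f x i := by
      simp only [hφdef, one_smul]
      congr 1
      funext k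
      simp [hvdef]
    rw [h0, h1, hxy] at hc
    simp at hc
    exact absurd hc (ne_of_gt (hpos c))
  intro x y hxy
  by_contra hne
  have hex : ∃ i0 : Fin d, x i0 ≠ y i0 := by
    by_contra h
    push_neg at h
    exact hne (funext h)
  obtain ⟨i0, hi0⟩ := hex
  haveI : Nonempty (Fin d) := ⟨i0⟩
  obtain ⟨i, -, hi⟩ := Finset.exists_max_image Finset.univ
    (fun j => |x j - y j|) ⟨i0, Finset.mem_univ i0⟩
  have hipos : 0 < |x i - y i| :=
    lt_of_lt_of_le (abs_pos.mpr (sub_ne_zero.mpr hi0)) (hi i0 (Finset.mem_univ i0))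
  rcases lt_or_gt_of_ne (abs_pos.mp hipos) with h | h
  · -- x i - y i < 0, use y x
    exact key y x hxy.symm i (by linarith)
      (fun j => by
        have := hi j (Finset.mem_univ j)
        rw [abs_sub_comm (y j) (x j)]
        calc |x j - y j| ≤ |x i - y i| := this
          _ = y i - x i := by rw [abs_of_neg h]; ring)
  · exact key x y hxy i h
      (fun j => le_trans (hi j (Finset.mem_univ j)) (le_of_eq (abs_of_pos h)))
end

section
/- Let g : ℝ^d → ℝ^d be defined by g_i(x) = x_i + exp(n·x_i)/(∑_j exp(n·x_j)) for fixed n > 0. Then g is surjective. -/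
open Real Finset
open scoped NNReal

/-- The map `g_i(x) = x_i + exp(n x_i)/∑_j exp(n x_j)` (for fixed `n > 0`) is onto. -/
theorem g_surjective (d : ℕ) (hd : 1 ≤ d) (n : ℝ) (hn : 0 < n)
    (g : (Fin d → ℝ) → Fin d → ℝ)
    (hg : ∀ x i, g x i = x i + Real.exp (n * x i) / ∑ j : Fin d, Real.exp (n * x j)) :
    Function.Surjective g := by
  intro y
  -- the map `k s = s * exp (n s)` on `ℝ≥0`
  set k : ℝ≥0 → ℝ≥0 := fun s => s * Real.toNNReal (Real.exp (n * s)) with hk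
  have hkcoe : ∀ s : ℝ≥0, (k s : ℝ) = (s : ℝ) * Real.exp (n * s) := by
    intro s
    simp [hk, Real.coe_toNNReal _ (Real.exp_pos _).le]
  have hkmono : StrictMono k := by
    intro a b hab
    rw [← NNReal.coe_lt_coe, hkcoe, hkcoe]
    have hab' : (a : ℝ) < b := hab
    have hb : (0 : ℝ) < b := lt_of_le_of_lt a.coe_nonneg hab'
    calc (a : ℝ) * Real.exp (n * a) ≤ (b : ℝ) * Real.exp (n * a) := by
          exact mul_le_mul_of_nonneg_right hab'.le (Real.exp_pos _).le
      _ < (b : ℝ) * Real.exp (n * b) := by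
          apply mul_lt_mul_of_pos_left _ hb
          exact Real.exp_lt_exp.2 (by nlinarith)
  have hkcont : Continuous k := by
    apply Continuous.mul continuous_id
    exact (continuous_real_toNNReal.comp (Real.continuous_exp.comp
      (continuous_const.mul NNReal.continuous_coe)))
  have hksurj : Function.Surjective k := by
    apply hkcont.surjective
    · have hle : ∀ s : ℝ≥0, s ≤ k s := by
        intro s
        rw [← NNReal.coe_le_coe, hkcoe]
        nlinarith [Real.add_one_le_exp (n * s), s.coe_nonneg,
          mul_nonneg hn.le s.coe_nonneg]
      exact Filter.tendsto_atTop_mono hle Filter.tendsto_id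
    · have h0 : k 0 = 0 := by ext; rw [hkcoe]; simp
      rw [show (Filter.atBot : Filter ℝ≥0) = pure 0 by
        simpa using Filter.OrderBot.atBot_eq ℝ≥0]
      simpa [h0] using Filter.tendsto_pure_pure k 0
  set e : ℝ≥0 ≃o ℝ≥0 := StrictMono.orderIsoOfSurjective k hkmono hksurj with he
  have hek : ∀ s, e s = k s := fun s => rfl
  have hsymm : ∀ c, k (e.symm c) = c := fun c => by
    rw [← hek]; exact e.apply_symm_apply c
  have hucont : Continuous (e.symm : ℝ≥0 → ℝ≥0) := (OrderIso.continuous e.symm)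
  have hu0 : e.symm 0 = 0 := by
    have h : e 0 = 0 := by rw [hek]; ext; rw [hkcoe]; simp
    have := congrArg e.symm h
    rw [e.symm_apply_apply] at this
    exact this.symm
  -- the function ψ
  set c : ℝ≥0 → Fin d → ℝ≥0 :=
    fun t j => t * Real.toNNReal (Real.exp (n * y j)) with hc
  set ψ : ℝ≥0 → ℝ := fun t => ∑ j : Fin d, (e.symm (c t j) : ℝ) with hψ
  have hψcont : Continuous ψ := by
    apply continuous_finset_sum
    intro j _
    exact NNReal.continuous_coe.comp (hucont.comp (by continuity))
  have hψ0 : ψ 0 = 0 := by simp [hψ, hc, hu0]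
  obtain ⟨j0⟩ : Nonempty (Fin d) := ⟨⟨0, hd⟩⟩
  set T : ℝ≥0 := Real.toNNReal (Real.exp (n * (1 - y j0))) with hT
  have hcT : c T j0 = k 1 := by
    ext
    rw [hkcoe]
    simp only [hc, hT, NNReal.coe_mul,
      Real.coe_toNNReal _ (Real.exp_pos _).le, NNReal.coe_one]
    rw [← Real.exp_add]
    ring_nf
  have hψT : 1 ≤ ψ T := by
    have h1 : (e.symm (c T j0) : ℝ) = 1 := by
      rw [hcT, ← hek, e.symm_apply_apply]; simp
    calc (1 : ℝ) = (e.symm (c T j0) : ℝ) := h1.symm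
      _ ≤ ψ T := Finset.single_le_sum (fun j _ => (e.symm (c T j)).coe_nonneg)
            (Finset.mem_univ j0)
  -- IVT
  have hmem : (1 : ℝ) ∈ Set.Icc (ψ 0) (ψ T) := by
    constructor
    · rw [hψ0]; norm_num
    · exact hψT
  obtain ⟨t, ht_mem, htψ⟩ := intermediate_value_Icc (zero_le : (0 : ℝ≥0) ≤ T) hψcont.continuousOn hmem
  have ht0 : t ≠ 0 := by
    rintro rfl
    rw [hψ0] at htψ
    norm_num at htψ
  have htpos : (0 : ℝ) < t := lt_of_le_of_ne t.coe_nonneg (by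
    simpa [eq_comm, NNReal.coe_eq_zero] using ht0)
  -- define u j
  set u : Fin d → ℝ := fun j => (e.symm (c t j) : ℝ) with hu
  have hueq : ∀ j, u j * Real.exp (n * u j) = (t : ℝ) * Real.exp (n * y j) := by
    intro j
    have := hsymm (c t j)
    have := congrArg (NNReal.toReal) this
    rw [hkcoe] at this
    rw [hu, this]
    simp [hc, Real.coe_toNNReal _ (Real.exp_pos _).le]
  have husum : ∑ j, u j = 1 := htψ
  have hupos : ∀ j, 0 < u j := by
    intro j
    rcases lt_or_eq_of_le (e.symm (c t j)).coe_nonneg with h | h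
    · exact h
    · exfalso
      have hz : u j = 0 := by rw [hu]; exact h.symm
      have := hueq j
      rw [hz, zero_mul] at this
      exact absurd this.symm (ne_of_gt (mul_pos htpos (Real.exp_pos _)))
  -- the preimage
  refine ⟨fun j => y j - u j, ?_⟩
  have hexp : ∀ j, Real.exp (n * (y j - u j)) = u j / t := by
    intro j
    have h := hueq j
    have hE : Real.exp (n * y j) = u j * Real.exp (n * u j) / t := by
      rw [eq_div_iff (ne_of_gt htpos)]
      linear_combination -(hueq j)
    rw [mul_sub, Real.exp_sub, hE]
    field_simp
  have hS : ∑ j : Fin d, Real.exp (n * (y j - u j)) = 1 / t := by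
    simp_rw [hexp]
    rw [← Finset.sum_div, husum]
  funext j
  rw [hg, hexp, hS]
  have : u j / (t : ℝ) / (1 / t) = u j := by field_simp
  rw [this]
  ring
end

section
/- Let g : ℝ^d → ℝ^d be defined by g_i(x) = x_i + exp(n·x_i)/(∑_j exp(n·x_j)) for fixed n > 0. Then g is a bijection of ℝ^d onto itself. -/
open Real Finset Filter

/-- The map `g_i(x) = x_i + exp(n x_i)/∑_j exp(n x_j)` (for fixed `n > 0`) is a
bijection of ℝ^d onto itself. -/
theorem g_bijective (d : ℕ) (hd : 1 ≤ d) (n : ℝ) (hn : 0 < n)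
    (g : (Fin d → ℝ) → Fin d → ℝ)
    (hg : ∀ x i, g x i = x i + Real.exp (n * x i) / ∑ j : Fin d, Real.exp (n * x j)) :
    Function.Bijective g := by
  have hdne : Nonempty (Fin d) := ⟨⟨0, hd⟩⟩
  have hSpos : ∀ x : Fin d → ℝ, 0 < ∑ j : Fin d, Real.exp (n * x j) := fun x =>
    Finset.sum_pos (fun j _ => Real.exp_pos _) Finset.univ_nonempty
  constructor
  · -- injectivity
    have key : ∀ a b : Fin d → ℝ, g a = g b → ∀ i : Fin d,
        (∀ j, a j - b j ≤ a i - b i) → a i - b i ≤ 0 := by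
      intro a b hab i hi
      have h1 : Real.exp (n * b i) * ∑ j : Fin d, Real.exp (n * a j)
          ≤ Real.exp (n * a i) * ∑ j : Fin d, Real.exp (n * b j) := by
        rw [Finset.mul_sum, Finset.mul_sum]
        apply Finset.sum_le_sum
        intro j _
        rw [← Real.exp_add, ← Real.exp_add]
        apply Real.exp_le_exp.2
        have := hi j
        nlinarith
      have h2 : Real.exp (n * b i) / ∑ j : Fin d, Real.exp (n * b j)
          ≤ Real.exp (n * a i) / ∑ j : Fin d, Real.exp (n * a j) := by
        rw [div_le_div_iff₀ (hSpos b) (hSpos a)]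
        linarith
      have h3 := congrFun hab i
      rw [hg, hg] at h3
      linarith
    intro x y hxy
    funext k
    obtain ⟨i, _, hi⟩ := Finset.exists_max_image Finset.univ (fun j => x j - y j)
      ⟨⟨0, hd⟩, Finset.mem_univ _⟩
    obtain ⟨m, _, hm⟩ := Finset.exists_max_image Finset.univ (fun j => y j - x j)
      ⟨⟨0, hd⟩, Finset.mem_univ _⟩
    have h1 : x i - y i ≤ 0 := key x y hxy i (fun j => hi j (Finset.mem_univ j))
    have h2 : y m - x m ≤ 0 := key y x hxy.symm m (fun j => hm j (Finset.mem_univ j))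
    have h3 := hi k (Finset.mem_univ k)
    have h4 := hm k (Finset.mem_univ k)
    linarith
  · -- surjectivity
    intro z
    set χ : ℝ → ℝ := fun u => u / n + Real.exp u with hχdef
    have hχmono : StrictMono χ := by
      intro a b hab
      have h1 : a / n < b / n := div_lt_div_of_pos_right hab hn
      have h2 : Real.exp a < Real.exp b := Real.exp_lt_exp.2 hab
      simp only [hχdef]
      linarith
    have hχcont : Continuous χ := by
      exact (continuous_id.div_const n).add Real.continuous_exp
    have hχtop : Tendsto χ atTop atTop := by
      exact Filter.Tendsto.atTop_add_atTop (tendsto_id.atTop_div_const hn) Real.tendsto_exp_atTop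
    have hχbot : Tendsto χ atBot atBot := by
      exact Filter.Tendsto.atBot_add (tendsto_id.atBot_div_const hn)
        Real.tendsto_exp_atBot
    have hχsurj : Function.Surjective χ := hχcont.surjective hχtop hχbot
    obtain ⟨e, hecoe⟩ : ∃ e : ℝ ≃o ℝ, ∀ u, e u = χ u :=
      ⟨StrictMono.orderIsoOfSurjective χ hχmono hχsurj, fun u => rfl⟩
    have he : ∀ u, χ (e.symm u) = u := fun u => by
      rw [← hecoe]; exact e.apply_symm_apply u
    have hesymm_cont : Continuous (e.symm : ℝ → ℝ) := OrderIso.continuous e.symm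
    have hesymm_top : Tendsto (e.symm : ℝ → ℝ) atTop atTop :=
      Monotone.tendsto_atTop_atTop e.symm.monotone (fun b => ⟨e b, (e.symm_apply_apply b).ge⟩)
    have hesymm_bot : Tendsto (e.symm : ℝ → ℝ) atBot atBot :=
      Monotone.tendsto_atBot_atBot e.symm.monotone (fun b => ⟨e b, (e.symm_apply_apply b).le⟩)
    set F : ℝ → ℝ := fun lam => ∑ i : Fin d, Real.exp (e.symm (z i - lam)) with hFdef
    have hsub_bot : ∀ i : Fin d, Tendsto (fun lam => z i - lam) atBot atTop := fun i =>
      (tendsto_const_nhds.add_atTop tendsto_neg_atBot_atTop).congr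
        (fun x => (sub_eq_add_neg (z i) x).symm)
    have hsub_top : ∀ i : Fin d, Tendsto (fun lam => z i - lam) atTop atBot := fun i =>
      (tendsto_const_nhds.add_atBot tendsto_neg_atTop_atBot).congr
        (fun x => (sub_eq_add_neg (z i) x).symm)
    have hFcont : Continuous F := by
      rw [hFdef]
      apply continuous_finset_sum
      intro i _
      exact Real.continuous_exp.comp (hesymm_cont.comp ((continuous_const.sub continuous_id)))
    -- F tends to atTop at atBot
    have hFtop : Tendsto F atBot atTop := by
      have hterm : Tendsto (fun lam => Real.exp (e.symm (z ⟨0, hd⟩ - lam))) atBot atTop :=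
        Real.tendsto_exp_atTop.comp (hesymm_top.comp (hsub_bot ⟨0, hd⟩))
      have hbound : ∀ lam, Real.exp (e.symm (z ⟨0, hd⟩ - lam)) ≤ F lam := by
        intro lam
        simp only [hFdef]
        exact Finset.single_le_sum (f := fun j : Fin d => Real.exp (e.symm (z j - lam)))
          (fun j _ => (Real.exp_pos _).le) (Finset.mem_univ (⟨0, hd⟩ : Fin d))
      exact tendsto_atTop_mono hbound hterm
    -- F tends to 0 at atTop
    have hF0 : Tendsto F atTop (nhds 0) := by
      have : Tendsto F atTop (nhds (∑ i : Fin d, (0:ℝ))) := by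
        rw [hFdef]
        apply tendsto_finset_sum
        intro i _
        exact Real.tendsto_exp_atBot.comp (hesymm_bot.comp (hsub_top i))
      simpa using this
    obtain ⟨a, ha⟩ := (hFtop.eventually_ge_atTop 1).exists
    obtain ⟨b, hb⟩ : ∃ b, F b ≤ 1 := by
      have := hF0.eventually_lt_const (by norm_num : (0:ℝ) < 1)
      exact this.exists.imp (fun b h => h.le)
    obtain ⟨lam, hlam⟩ : ∃ lam, F lam = 1 := by
      have := intermediate_value_univ b a hFcont
      exact this ⟨hb, ha⟩
    set u : Fin d → ℝ := fun i => e.symm (z i - lam) with hu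
    have hux : ∀ i, n * (z i - Real.exp (u i)) = u i + n * lam := by
      intro i
      have h : u i / n + Real.exp (u i) = z i - lam := he (z i - lam)
      field_simp at h ⊢
      nlinarith [h]
    have hsum : ∑ j : Fin d, Real.exp (n * (z j - Real.exp (u j))) = Real.exp (n * lam) := by
      have h1 : ∀ j : Fin d, Real.exp (n * (z j - Real.exp (u j)))
          = Real.exp (u j) * Real.exp (n * lam) := by
        intro j
        rw [hux j, Real.exp_add]
      rw [Finset.sum_congr rfl (fun j _ => h1 j), ← Finset.sum_mul]
      have h2 : ∑ j : Fin d, Real.exp (u j) = 1 := hlam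
      rw [h2, one_mul]
    refine ⟨fun i => z i - Real.exp (u i), ?_⟩
    funext i
    rw [hg]
    show z i - Real.exp (u i) + Real.exp (n * (z i - Real.exp (u i)))
        / ∑ j : Fin d, Real.exp (n * (z j - Real.exp (u j))) = z i
    rw [hsum, hux i, Real.exp_add, mul_div_assoc, div_self (Real.exp_pos _).ne', mul_one]
    ring
end

section
/- Let (n_k) be a sequence of positive reals tending to infinity, (u^k) a sequence of payoff functions for a fixed finite strategic game form converging to u, and (x^k) a sequence of mixed strategy profiles with x^k an O_{n_k}-equilibrium of u^k, converging to x. Then x is a Nash equilibrium of the game with payoff function u. -/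
open Finset Filter

/-- Expected payoff to player `i` when playing pure action `b` against the mixed
profile `x` of the other players (multilinear extension). -/
noncomputable def payoffAgainst {I : Type*} [Fintype I] [DecidableEq I]
    {A : I → Type*} [∀ i, Fintype (A i)] [∀ i, DecidableEq (A i)]
    (u : ∀ i : I, (∀ j : I, A j) → ℝ) (x : ∀ i : I, A i → ℝ) (i : I) (b : A i) : ℝ :=
  ∑ a : (∀ j : I, A j),
    if a i = b then (∏ j ∈ Finset.univ.erase i, x j (a j)) * u i a else 0

/-- Expected payoff to player `i` under the mixed strategy profile `x`. -/
noncomputable def mixedPayoff {I : Type*} [Fintype I] [DecidableEq I]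
    {A : I → Type*} [∀ i, Fintype (A i)] [∀ i, DecidableEq (A i)]
    (u : ∀ i : I, (∀ j : I, A j) → ℝ) (x : ∀ i : I, A i → ℝ) (i : I) : ℝ :=
  ∑ a : (∀ j : I, A j), (∏ j : I, x j (a j)) * u i a

lemma payoffAgainst_tendsto {I : Type*} [Fintype I] [DecidableEq I]
    {A : I → Type*} [∀ i, Fintype (A i)] [∀ i, DecidableEq (A i)]
    (u : ℕ → ∀ i : I, (∀ j : I, A j) → ℝ) (U : ∀ i : I, (∀ j : I, A j) → ℝ)
    (hu : ∀ (i : I) (a : ∀ j : I, A j), Tendsto (fun k => u k i a) atTop (nhds (U i a)))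
    (x : ℕ → ∀ i : I, A i → ℝ) (X : ∀ i : I, A i → ℝ)
    (hX : ∀ (i : I) (b : A i), Tendsto (fun k => x k i b) atTop (nhds (X i b)))
    (i : I) (b : A i) :
    Tendsto (fun k => payoffAgainst (u k) (x k) i b) atTop (nhds (payoffAgainst U X i b)) := by
  unfold payoffAgainst
  apply tendsto_finset_sum
  intro a _
  by_cases h : a i = b
  · simp only [h, if_pos rfl]
    exact ((tendsto_finset_prod _ (fun j _ => hX j (a j))).mul (hu i a))
  · simp only [if_neg h]
    exact tendsto_const_nhds

lemma mixedPayoff_eq {I : Type*} [Fintype I] [DecidableEq I]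
    {A : I → Type*} [∀ i, Fintype (A i)] [∀ i, DecidableEq (A i)]
    (U : ∀ i : I, (∀ j : I, A j) → ℝ) (X : ∀ i : I, A i → ℝ) (i : I) :
    mixedPayoff U X i = ∑ b : A i, X i b * payoffAgainst U X i b := by
  unfold mixedPayoff payoffAgainst
  rw [eq_comm]
  calc ∑ b : A i, X i b * ∑ a : (∀ j, A j),
        (if a i = b then (∏ j ∈ univ.erase i, X j (a j)) * U i a else 0)
      = ∑ b : A i, ∑ a : (∀ j, A j),
        (if a i = b then X i b * ((∏ j ∈ univ.erase i, X j (a j)) * U i a) else 0) := by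
        simp [Finset.mul_sum, mul_ite]
    _ = ∑ a : (∀ j, A j), ∑ b : A i,
        (if a i = b then X i b * ((∏ j ∈ univ.erase i, X j (a j)) * U i a) else 0) :=
        Finset.sum_comm
    _ = ∑ a : (∀ j, A j), X i (a i) * ((∏ j ∈ univ.erase i, X j (a j)) * U i a) := by
        simp [Finset.sum_ite_eq]
    _ = ∑ a : (∀ j, A j), (∏ j : I, X j (a j)) * U i a := by
        refine Finset.sum_congr rfl fun a _ => ?_
        rw [← mul_assoc, Finset.mul_prod_erase univ (fun j => X j (a j)) (mem_univ i)]

set_option maxHeartbeats 1000000 in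
/-- A limit of `O_{n_k}`-equilibria of games `u^k`, with `n_k → ∞` and `u^k → u`,
is a Nash equilibrium of the limit game `u`. -/
theorem limit_of_on_equilibria_is_nash {I : Type*} [Fintype I] [DecidableEq I]
    {A : I → Type*} [∀ i, Fintype (A i)] [∀ i, DecidableEq (A i)]
    (n : ℕ → ℝ) (hn : ∀ k, 0 < n k) (hn' : Tendsto n atTop atTop)
    (u : ℕ → ∀ i : I, (∀ j : I, A j) → ℝ)
    (U : ∀ i : I, (∀ j : I, A j) → ℝ)
    (hu : ∀ (i : I) (a : ∀ j : I, A j), Tendsto (fun k => u k i a) atTop (nhds (U i a)))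
    (x : ℕ → ∀ i : I, A i → ℝ)
    (hx0 : ∀ k i a, 0 ≤ x k i a) (hx1 : ∀ k i, ∑ a : A i, x k i a = 1)
    (heq : ∀ (k : ℕ) (i : I) (b : A i),
      x k i b = Real.exp (n k * payoffAgainst (u k) (x k) i b) /
        ∑ b' : A i, Real.exp (n k * payoffAgainst (u k) (x k) i b'))
    (X : ∀ i : I, A i → ℝ)
    (hX : ∀ (i : I) (b : A i), Tendsto (fun k => x k i b) atTop (nhds (X i b))) :
    ∀ (i : I) (b : A i), payoffAgainst U X i b ≤ mixedPayoff U X i := by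
  intro i b
  by_contra hlt
  push_neg at hlt
  have hX0 : ∀ b', 0 ≤ X i b' := fun b' =>
    ge_of_tendsto (hX i b') (Eventually.of_forall fun k => hx0 k i b')
  have hX1 : ∑ b' : A i, X i b' = 1 := by
    have h1 : Tendsto (fun k => ∑ b' : A i, x k i b') atTop (nhds (∑ b' : A i, X i b')) :=
      tendsto_finset_sum _ (fun b' _ => hX i b')
    have h2 : Tendsto (fun k => ∑ b' : A i, x k i b') atTop (nhds 1) := by
      simpa [hx1 _ i] using (tendsto_const_nhds : Tendsto (fun _ : ℕ => (1:ℝ)) atTop (nhds 1))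
    exact tendsto_nhds_unique h1 h2
  have key : ∃ b', 0 < X i b' ∧ payoffAgainst U X i b' < payoffAgainst U X i b := by
    by_contra h
    push_neg at h
    have hle : payoffAgainst U X i b ≤ mixedPayoff U X i := by
      rw [mixedPayoff_eq]
      calc payoffAgainst U X i b
          = ∑ b' : A i, X i b' * payoffAgainst U X i b := by
            rw [← Finset.sum_mul, hX1, one_mul]
        _ ≤ ∑ b' : A i, X i b' * payoffAgainst U X i b' := by
            apply Finset.sum_le_sum
            intro b' _
            rcases eq_or_lt_of_le (hX0 b') with h0 | h0
            · rw [← h0]; simp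
            · exact mul_le_mul_of_nonneg_left (h b' h0) h0.le
    linarith
  obtain ⟨b', hpos, hPlt⟩ := key
  set ε := payoffAgainst U X i b - payoffAgainst U X i b' with hε
  have hε0 : 0 < ε := by simp only [hε]; linarith
  have hconv : Tendsto
      (fun k => payoffAgainst (u k) (x k) i b' - payoffAgainst (u k) (x k) i b)
      atTop (nhds (-ε)) := by
    have := (payoffAgainst_tendsto u U hu x X hX i b').sub
      (payoffAgainst_tendsto u U hu x X hX i b)
    have heq' : payoffAgainst U X i b' - payoffAgainst U X i b = -ε := by
      simp [hε]
    rwa [heq'] at this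
  have hev : ∀ᶠ k in atTop,
      payoffAgainst (u k) (x k) i b' - payoffAgainst (u k) (x k) i b ≤ -(ε/2) :=
    hconv.eventually (eventually_le_nhds (by linarith))
  have hbound : ∀ k, x k i b' ≤
      Real.exp (n k * (payoffAgainst (u k) (x k) i b' - payoffAgainst (u k) (x k) i b)) := by
    intro k
    rw [heq k i b', mul_sub, Real.exp_sub]
    gcongr
    exact Finset.single_le_sum (f := fun c => Real.exp (n k * payoffAgainst (u k) (x k) i c)) (fun c _ => (Real.exp_pos _).le) (Finset.mem_univ b)
  have hupper : ∀ᶠ k in atTop, x k i b' ≤ Real.exp (n k * (-(ε/2))) := by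
    refine hev.mono fun k hk => (hbound k).trans ?_
    exact Real.exp_le_exp.2 (mul_le_mul_of_nonneg_left hk (hn k).le)
  have hatBot : Tendsto (fun k => n k * (-(ε/2))) atTop atBot := by
    have h1 : Tendsto (fun k => (ε/2) * n k) atTop atTop :=
      hn'.const_mul_atTop (by positivity)
    have h2 : Tendsto (fun k => -((ε/2) * n k)) atTop atBot := tendsto_neg_atBot_iff.2 h1
    convert h2 using 2 with k
    ring
  have hzero : Tendsto (fun k => Real.exp (n k * (-(ε/2)))) atTop (nhds 0) :=
    Real.tendsto_exp_atBot.comp hatBot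
  have hx'zero : Tendsto (fun k => x k i b') atTop (nhds 0) :=
    squeeze_zero' (Eventually.of_forall fun k => hx0 k i b') hupper hzero
  have : X i b' = 0 := tendsto_nhds_unique (hX i b') hx'zero
  linarith
end

section
/- With notation as in Lemma on O_n-equilibria: if u_i(a_i, x_{−i}) > u_i(â_i, x_{−i}) + δ for some δ > 0 and all large k (with u, x replaced by u^k, x^k), then x^k_i(â_i) < 1/exp(n_k·δ); in particular x_i(â_i) = 0 in the limit. -/
open Finset Filter

set_option maxHeartbeats 1000000 in
/-- If action `a_i` eventually yields more than `â_i` by a margin `δ > 0` along a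
sequence of `O_{n_k}`-equilibria with `n_k → ∞`, then the probability of `â_i` is
eventually below `exp(−n_k δ)`, and vanishes in the limit. -/
theorem on_equilibrium_suboptimal_action_vanishes {I : Type*} [Fintype I] [DecidableEq I]
    {A : I → Type*} [∀ i, Fintype (A i)] [∀ i, DecidableEq (A i)]
    (n : ℕ → ℝ) (hn : ∀ k, 0 < n k) (hn' : Tendsto n atTop atTop)
    (u : ℕ → ∀ i : I, (∀ j : I, A j) → ℝ)
    (x : ℕ → ∀ i : I, A i → ℝ)
    (hx0 : ∀ k i a, 0 ≤ x k i a) (hx1 : ∀ k i, ∑ a : A i, x k i a = 1)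
    (heq : ∀ (k : ℕ) (i : I) (b : A i),
      x k i b = Real.exp (n k * payoffAgainst (u k) (x k) i b) /
        ∑ b' : A i, Real.exp (n k * payoffAgainst (u k) (x k) i b'))
    (X : ∀ i : I, A i → ℝ)
    (hX : ∀ (i : I) (b : A i), Tendsto (fun k => x k i b) atTop (nhds (X i b)))
    (i : I) (ai hat_ai : A i) (δ : ℝ) (hδ : 0 < δ)
    (hgap : ∀ᶠ k in atTop,
      payoffAgainst (u k) (x k) i ai > payoffAgainst (u k) (x k) i hat_ai + δ) :
    (∀ᶠ k in atTop, x k i hat_ai < 1 / Real.exp (n k * δ)) ∧ X i hat_ai = 0 := by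
  have hev : ∀ᶠ k in atTop, x k i hat_ai < 1 / Real.exp (n k * δ) := by
    filter_upwards [hgap] with k hk
    have hS : Real.exp (n k * payoffAgainst (u k) (x k) i ai)
        ≤ ∑ b' : A i, Real.exp (n k * payoffAgainst (u k) (x k) i b') :=
      Finset.single_le_sum (f := fun b' => Real.exp (n k * payoffAgainst (u k) (x k) i b'))
        (fun b _ => (Real.exp_pos _).le) (Finset.mem_univ ai)
    rw [heq k i hat_ai]
    have h1 : Real.exp (n k * payoffAgainst (u k) (x k) i hat_ai)
          / ∑ b' : A i, Real.exp (n k * payoffAgainst (u k) (x k) i b')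
        ≤ Real.exp (n k * payoffAgainst (u k) (x k) i hat_ai)
          / Real.exp (n k * payoffAgainst (u k) (x k) i ai) :=
      div_le_div_of_nonneg_left (Real.exp_pos _).le (Real.exp_pos _) hS
    refine lt_of_le_of_lt h1 ?_
    rw [← Real.exp_sub, one_div, ← Real.exp_neg, Real.exp_lt_exp]
    have h2 : n k * (payoffAgainst (u k) (x k) i hat_ai - payoffAgainst (u k) (x k) i ai)
        < n k * (-δ) := by
      apply mul_lt_mul_of_pos_left (by linarith) (hn k)
    nlinarith [h2]
  refine ⟨hev, ?_⟩
  have hlim : Tendsto (fun k => 1 / Real.exp (n k * δ)) atTop (nhds 0) := by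
    simp only [one_div]
    exact (Real.tendsto_exp_atTop.comp (hn'.atTop_mul_const hδ)).inv_tendsto_atTop
  have h0 : Tendsto (fun k => x k i hat_ai) atTop (nhds 0) :=
    squeeze_zero' (Eventually.of_forall fun k => hx0 k i hat_ai)
      (hev.mono fun k h => h.le) hlim
  exact tendsto_nhds_unique (hX i hat_ai) h0
end

section
/- Let y ∈ ℝ^d with y_1 ≤ y_2 ≤ ... ≤ y_d, and let x ∈ ℝ^d satisfy ∑_i (y_i − x_i) = 1 with y_i − x_i ≥ 0 for all i and x_1 ≤ x_2 ≤ ... ≤ x_d. Let α* be the unique real with ∑_i max(y_i − α*, 0) = 1. Then x_d ≥ α*. -/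
open Finset

/-!
If every `x i` were below `α*`, each term `max (y i - α*) 0` would be at most `y i - x i`, and
strictly smaller wherever `y i - x i > 0`; such an index exists because these gaps sum to `1`.
Summing would give `1 < 1`.
-/

section

variable {α : Type*} [AddCommGroup α] [LinearOrder α] [IsOrderedAddMonoid α]

lemma max_sub_zero_lt_sub {x y a : α} (hxa : x < a) (hxy : x < y) : max (y - a) 0 < y - x :=
  max_lt (sub_lt_sub_left hxa y) (sub_pos.mpr hxy)

lemma max_sub_zero_le_sub {x y a : α} (hxa : x ≤ a) (hxy : x ≤ y) : max (y - a) 0 ≤ y - x :=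
  max_le (sub_le_sub_left hxa y) (sub_nonneg.mpr hxy)

lemma sum_max_sub_zero_lt_sum_sub {ι : Type*} {s : Finset ι} {x y : ι → α} {a : α}
    (hxa : ∀ i ∈ s, x i < a) (hxy : ∀ i ∈ s, x i ≤ y i) (hpos : 0 < ∑ i ∈ s, (y i - x i)) :
    ∑ i ∈ s, max (y i - a) 0 < ∑ i ∈ s, (y i - x i) := by
  obtain ⟨j, hj, hgap⟩ : ∃ j ∈ s, (0 : α) < y j - x j :=
    exists_lt_of_sum_lt (by simpa using hpos)
  exact sum_lt_sum (fun i hi => max_sub_zero_le_sub (hxa i hi).le (hxy i hi))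
    ⟨j, hj, max_sub_zero_lt_sub (hxa j hj) (sub_pos.mp hgap)⟩

end

theorem last_coord_ge_alphaStar_general (d : ℕ) (y x : Fin (d + 1) → ℝ)
    (hx : Monotone x)
    (hxy : ∀ i, 0 ≤ y i - x i)
    (hsum : ∑ i : Fin (d + 1), (y i - x i) = 1)
    (αstar : ℝ)
    (hα : ∑ i : Fin (d + 1), max (y i - αstar) 0 = 1) :
    αstar ≤ x (Fin.last d) := by
  by_contra! hlast
  have hxa : ∀ i ∈ univ, x i < αstar := fun i _ => (hx (Fin.le_last i)).trans_lt hlast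
  have hlt := sum_max_sub_zero_lt_sum_sub hxa (fun i _ => sub_nonneg.mp (hxy i))
    (hsum ▸ one_pos)
  rw [hα, hsum] at hlt
  exact lt_irrefl 1 hlt

/-- If `y` is nondecreasing, `x ≤ y` coordinatewise with `x` nondecreasing and
`∑ (y_i − x_i) = 1`, and `α*` satisfies `∑ max(y_i − α*, 0) = 1`, then the largest
coordinate of `x` is at least `α*`. -/
theorem last_coord_ge_alphaStar (d : ℕ) (y x : Fin (d + 1) → ℝ)
    (hy : Monotone y) (hx : Monotone x)
    (hxy : ∀ i, 0 ≤ y i - x i)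
    (hsum : ∑ i : Fin (d + 1), (y i - x i) = 1)
    (αstar : ℝ)
    (hα : ∑ i : Fin (d + 1), max (y i - αstar) 0 = 1) :
    αstar ≤ x (Fin.last d) :=
  last_coord_ge_alphaStar_general d y x hx hxy hsum αstar hα
end

section
/- Define g^(n), h^(n) = (g^(n))^{-1}, and h as above. Then for every ε > 0 there exists N such that for all n ≥ N and all y ∈ ℝ^d, ‖h^(n)(y) − h(y)‖_∞ ≤ d·ε; i.e., h^(n) converges to h uniformly on ℝ^d as n → ∞. -/
set_option maxHeartbeats 1000000


open Finset

/-- `α*(y)`: the unique real with `∑_i max(y_i − α, 0) = 1`, realized as the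
supremum of the set where the (decreasing) sum is at least 1. -/
noncomputable def alphaStar {d : ℕ} (y : Fin d → ℝ) : ℝ :=
  sSup {α : ℝ | 1 ≤ ∑ i : Fin d, max (y i - α) 0}

/-- The Kohlberg–Mertens limit map `h_i(y) = min(y_i, α*(y))`. -/
noncomputable def kmMap {d : ℕ} (y : Fin d → ℝ) : Fin d → ℝ :=
  fun i => min (y i) (alphaStar y)

/-- The inverses `h^(n)` of the maps `g^(n)_i(x) = x_i + exp(n x_i)/∑_j exp(n x_j)`
converge uniformly on all of `ℝ^d` to the map `h_i(y) = min(y_i, α*(y))`. -/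
theorem hn_tendsto_uniformly_km (d : ℕ) (hd : 1 ≤ d)
    (g : ℝ → (Fin d → ℝ) → Fin d → ℝ)
    (hg : ∀ (n : ℝ) (x : Fin d → ℝ) (i : Fin d),
      g n x i = x i + Real.exp (n * x i) / ∑ j : Fin d, Real.exp (n * x j))
    (hbij : ∀ n : ℝ, 0 < n → Function.Bijective (g n))
    (hαchar : ∀ y : Fin d → ℝ, ∑ i : Fin d, max (y i - alphaStar y) 0 = 1) :
    ∀ ε : ℝ, 0 < ε → ∃ N : ℝ, 0 < N ∧ ∀ n : ℝ, N ≤ n →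
      ∀ (y : Fin d → ℝ) (i : Fin d),
        |Function.invFun (g n) y i - kmMap y i| ≤ (d : ℝ) * ε := by
  intro ε hε
  haveI : Nonempty (Fin d) := Fin.pos_iff_nonempty.mp hd
  have hd1 : (1 : ℝ) ≤ (d : ℝ) := by exact_mod_cast hd
  have hd0 : (0 : ℝ) < (d : ℝ) := lt_of_lt_of_le one_pos hd1
  -- the cutoff for δ = log n / n
  set c : ℝ := min (ε / 2) (1 / (2 * (d : ℝ) ^ 2)) with hc_def
  have hc0 : 0 < c := lt_min (by linarith) (by positivity)
  -- log n / n → 0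
  have hlog : Filter.Tendsto (fun n : ℝ => Real.log n / n) Filter.atTop (nhds 0) :=
    Real.isLittleO_log_id_atTop.tendsto_div_nhds_zero
  obtain ⟨N₀, hN₀⟩ := Filter.eventually_atTop.mp (hlog.eventually_lt_const hc0)
  refine ⟨max N₀ 3, lt_of_lt_of_le (by norm_num) (le_max_right _ _), ?_⟩
  intro n hn y i
  have hn3 : (3 : ℝ) ≤ n := le_trans (le_max_right _ _) hn
  have hn0 : (0 : ℝ) < n := by linarith
  set δ : ℝ := Real.log n / n with hδ_def
  have hδc : δ < c := hN₀ n (le_trans (le_max_left _ _) hn)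
  have hδε : δ ≤ ε / 2 := le_of_lt (lt_of_lt_of_le hδc (min_le_left _ _))
  have hδd : δ < 1 / (2 * (d : ℝ) ^ 2) := lt_of_lt_of_le hδc (min_le_right _ _)
  have hdδ : (d : ℝ) * δ < 1 / (2 * (d : ℝ)) := by
    rw [lt_div_iff₀ (by positivity)]
    calc (d : ℝ) * δ * (2 * (d : ℝ)) = δ * (2 * (d : ℝ) ^ 2) := by ring
      _ < (1 / (2 * (d : ℝ) ^ 2)) * (2 * (d : ℝ) ^ 2) := by
          apply mul_lt_mul_of_pos_right hδd (by positivity)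
      _ = 1 := by field_simp
  have hdδ1 : (d : ℝ) * δ < 1 / (d : ℝ) := lt_of_lt_of_le hdδ (by
    apply div_le_div_of_nonneg_left (by norm_num) hd0; linarith)
  have hlogn : 1 < Real.log n := by
    rw [Real.lt_log_iff_exp_lt hn0]
    calc Real.exp 1 ≤ 2.7182818286 := Real.exp_one_lt_d9.le
      _ < 3 := by norm_num
      _ ≤ n := hn3
  have hδ0 : 0 < δ := div_pos (by linarith) hn0
  have hnδ : n * δ = Real.log n := by rw [hδ_def]; field_simp [hn0.ne']
  have h1n : 1 / n < δ := by
    rw [hδ_def]; gcongr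
  have hexpnδ : Real.exp (-(n * δ)) = 1 / n := by
    rw [hnδ, Real.exp_neg, Real.exp_log hn0, one_div]
  -- set up x, S, p, β
  set x : Fin d → ℝ := Function.invFun (g n) y with hx_def
  have hgx : g n x = y := Function.rightInverse_invFun (hbij n hn0).2 y
  clear_value x
  set S : ℝ := ∑ j : Fin d, Real.exp (n * x j) with hS_def
  have hS0 : 0 < S := Finset.sum_pos (fun j _ => Real.exp_pos _) Finset.univ_nonempty
  set p : Fin d → ℝ := fun j => Real.exp (n * x j) / S with hp_def
  have hp0 : ∀ j, 0 < p j := fun j => div_pos (Real.exp_pos _) hS0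
  have hpsum : ∑ j : Fin d, p j = 1 := by
    rw [hp_def, ← Finset.sum_div, ← hS_def, div_self hS0.ne']
  have hp1 : ∀ j, p j ≤ 1 := by
    intro j
    rw [hp_def, div_le_one hS0, hS_def]
    exact Finset.single_le_sum (f := fun k => Real.exp (n * x k))
      (fun k _ => (Real.exp_pos _).le) (Finset.mem_univ j)
  have hy : ∀ j, y j = x j + p j := by
    intro j
    rw [← hgx, hg n x j]
  set β : ℝ := Real.log S / n with hβ_def
  have hpexp : ∀ j, p j = Real.exp (n * (x j - β)) := by
    intro j
    have : n * (x j - β) = n * x j - Real.log S := by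
      rw [hβ_def]; field_simp
    rw [this, Real.exp_sub, Real.exp_log hS0]
  have hxβ : ∀ j, x j ≤ β := by
    intro j
    have h1 : Real.exp (n * (x j - β)) ≤ Real.exp 0 := by
      rw [Real.exp_zero, ← hpexp j]; exact hp1 j
    have := Real.exp_le_exp.mp h1
    nlinarith
  clear_value S p β
  -- P1 : below β the softmax weight is small
  have P1 : ∀ j, y j ≤ β → p j ≤ δ := by
    intro j hj
    by_contra hcon
    push_neg at hcon
    have hxj : x j ≤ β - p j := by have := hy j; linarith
    have h1 : p j ≤ Real.exp (-(n * p j)) := by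
      calc p j = Real.exp (n * (x j - β)) := hpexp j
        _ ≤ Real.exp (-(n * p j)) := Real.exp_le_exp.mpr (by nlinarith [hp0 j])
    have h2 : Real.exp (-(n * p j)) ≤ Real.exp (-(n * δ)) := by
      apply Real.exp_le_exp.mpr
      nlinarith [hp0 j]
    rw [hexpnδ] at h2
    linarith
  -- P2 : above β, x is close to β
  have P2 : ∀ j, β ≤ y j → β - δ < x j := by
    intro j hj
    by_contra hcon
    push_neg at hcon
    have h1 : p j ≤ Real.exp (-(n * δ)) := by
      calc p j = Real.exp (n * (x j - β)) := hpexp j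
        _ ≤ Real.exp (-(n * δ)) := Real.exp_le_exp.mpr (by nlinarith)
    rw [hexpnδ] at h1
    have := hy j
    linarith
  -- upper bound on the sum at level β
  have hFβ_le : ∑ j : Fin d, max (y j - β) 0 ≤ 1 := by
    rw [← hpsum]
    apply Finset.sum_le_sum
    intro j _
    apply max_le
    · have := hxβ j; have := hy j; linarith
    · exact (hp0 j).le
  -- some coordinate is above β
  have hexists_gt : ∃ j, β < y j := by
    by_contra hcon
    push_neg at hcon
    have h1 : (1 : ℝ) ≤ ∑ _j : Fin d, δ := by
      rw [← hpsum]
      exact Finset.sum_le_sum fun j _ => P1 j (hcon j)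
    rw [Finset.sum_const, Finset.card_univ, Fintype.card_fin, nsmul_eq_mul] at h1
    have h2 : (d : ℝ) * δ < 1 := lt_of_lt_of_le hdδ (by
      rw [div_le_one (by positivity)]; linarith)
    linarith
  -- strict lower bound on the sum at level β
  have hFβ_gt : 1 - (d : ℝ) * δ < ∑ j : Fin d, max (y j - β) 0 := by
    obtain ⟨j₁, hj₁⟩ := hexists_gt
    have h1 : ∑ j : Fin d, (p j - δ) < ∑ j : Fin d, max (y j - β) 0 := by
      apply Finset.sum_lt_sum
      · intro j _
        by_cases hj : y j ≤ β
        · have := P1 j hj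
          have : p j - δ ≤ 0 := by linarith
          exact le_trans this (le_max_right _ _)
        · push_neg at hj
          have h2 := P2 j hj.le
          have h3 := hy j
          calc p j - δ ≤ y j - β := by linarith
            _ ≤ max (y j - β) 0 := le_max_left _ _
      · refine ⟨j₁, Finset.mem_univ j₁, ?_⟩
        have h2 := P2 j₁ hj₁.le
        have h3 := hy j₁
        calc p j₁ - δ < y j₁ - β := by linarith
          _ ≤ max (y j₁ - β) 0 := le_max_left _ _
    rw [Finset.sum_sub_distrib, hpsum, Finset.sum_const, Finset.card_univ,
      Fintype.card_fin, nsmul_eq_mul] at h1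
    linarith
  set α : ℝ := alphaStar y with hα_def
  have hα : ∑ j : Fin d, max (y j - α) 0 = 1 := hαchar y
  -- L1 : α ≤ β
  have L1 : α ≤ β := by
    by_contra hcon
    push_neg at hcon
    obtain ⟨i₀, -, hi₀⟩ : ∃ i₀ ∈ Finset.univ, (0 : ℝ) < max (y i₀ - α) 0 := by
      apply Finset.exists_lt_of_sum_lt (f := fun _ => (0 : ℝ))
      rw [Finset.sum_const_zero, hα]; exact one_pos
    have hyi₀ : α < y i₀ := by
      rcases max_cases (y i₀ - α) 0 with ⟨h, _⟩ | ⟨h, _⟩ <;> rw [h] at hi₀ <;> [linarith; linarith]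
    have h1 : ∑ j : Fin d, max (y j - α) 0 < ∑ j : Fin d, max (y j - β) 0 := by
      apply Finset.sum_lt_sum
      · intro j _
        exact max_le_max (by linarith) le_rfl
      · refine ⟨i₀, Finset.mem_univ i₀, ?_⟩
        calc max (y i₀ - α) 0 = y i₀ - α := max_eq_left (by linarith)
          _ < y i₀ - β := by linarith
          _ ≤ max (y i₀ - β) 0 := le_max_left _ _
    rw [hα] at h1
    linarith
  -- L2 : β ≤ α + dδ
  have L2 : β ≤ α + (d : ℝ) * δ := by
    by_contra hcon
    push_neg at hcon
    obtain ⟨i₀, hi₀⟩ : ∃ i₀, 1 / (d : ℝ) ≤ max (y i₀ - α) 0 := by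
      by_contra hcon2
      push_neg at hcon2
      have h1 : ∑ j : Fin d, max (y j - α) 0 < ∑ _j : Fin d, 1 / (d : ℝ) :=
        Finset.sum_lt_sum_of_nonempty Finset.univ_nonempty fun j _ => hcon2 j
      rw [hα, Finset.sum_const, Finset.card_univ, Fintype.card_fin, nsmul_eq_mul] at h1
      rw [mul_one_div, div_self hd0.ne'] at h1
      exact lt_irrefl _ h1
    have hyi₀ : 1 / (d : ℝ) ≤ y i₀ - α := by
      rcases max_cases (y i₀ - α) 0 with ⟨h, _⟩ | ⟨h, _⟩ <;> rw [h] at hi₀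
      · exact hi₀
      · exfalso; have : (0:ℝ) < 1 / (d:ℝ) := by positivity
        linarith
    have h1 : ∑ j : Fin d, max (y j - β) 0 ≤
        ∑ j : Fin d, (max (y j - α) 0 - if j = i₀ then (d : ℝ) * δ else 0) := by
      apply Finset.sum_le_sum
      intro j _
      by_cases hj : j = i₀
      · subst hj
        rw [if_pos rfl]
        have hd0' : (0:ℝ) < 1 / (d:ℝ) := by positivity
        have hmax : max (y j - α) 0 = y j - α := max_eq_left (by linarith)
        rw [hmax]
        apply max_le
        · linarith
        · linarith
      · simp only [if_neg hj, sub_zero]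
        exact max_le_max (by linarith) le_rfl
    rw [Finset.sum_sub_distrib, hα, Finset.sum_ite_eq' Finset.univ i₀ (fun _ => (d:ℝ)*δ)] at h1
    simp only [Finset.mem_univ, if_true] at h1
    linarith
  -- final bounds
  have hxy : x i ≤ y i := by have := hy i; have := (hp0 i).le; linarith
  have hhigh : x i ≤ min (y i) α + (d : ℝ) * δ := by
    rcases min_cases (y i) α with ⟨h, _⟩ | ⟨h, _⟩ <;> rw [h]
    · nlinarith [hxy, hd0.le, hδ0.le]
    · have := hxβ i; linarith
  have hlow : min (y i) α - δ ≤ x i := by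
    by_cases hc2 : y i ≤ β
    · have h1 := P1 i hc2
      have h2 := hy i
      have : min (y i) α ≤ y i := min_le_left _ _
      linarith
    · push_neg at hc2
      have h1 := P2 i hc2.le
      have : min (y i) α ≤ α := min_le_right _ _
      linarith
  have hk : kmMap y i = min (y i) α := rfl
  rw [hk]
  rw [abs_le]
  constructor
  · nlinarith [mul_le_mul_of_nonneg_right hd1 hε.le]
  · nlinarith [mul_le_mul_of_nonneg_left hδε hd0.le, mul_pos hd0 hε]
end
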